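/- Let 0 < K₋ < K₊, γ ≥ 0, and let Ē* : [K₋, K₊] → (0, ∞) be differentiable with |K (d/dK) log Ē*(K) + 5/3| ≤ γ for all K in [K₋, K₊]. Set Re = (K₊/K₋)^(4/3), fix ε̄ > 0, and define α(K) = Ē*(K) / (ε̄^(2/3) K^(−5/3)). Then for all K, K' ∈ [K₋, K₊]: Re^(−3γ/4) ≤ α(K)/α(K') ≤ Re^(3γ/4). -/

import Mathlib

/-!
In the variable `t = log K`, the function `log α(e^t) = log Ē*(e^t) + (5/3) t + const` has
derivative `K (d/dK) log Ē*(K) + 5/3`, bounded by `γ`. By the mean value theorem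
`|log α(K) − log α(K')| ≤ γ log (K₊/K₋) = (3γ/4) log Re`; exponentiate.
-/

open Set

theorem abs_sub_le_mul_abs_log_sub_of_abs_mul_deriv_le {f : ℝ → ℝ} {a b C : ℝ} (ha : 0 < a)
    (hf : ∀ x ∈ Icc a b, DifferentiableAt ℝ f x) (hC : ∀ x ∈ Icc a b, |x * deriv f x| ≤ C)
    {x y : ℝ} (hx : x ∈ Icc a b) (hy : y ∈ Icc a b) :
    |f x - f y| ≤ C * |Real.log x - Real.log y| := by
  have hpos : ∀ z ∈ Icc a b, 0 < z := fun z hz => ha.trans_le hz.1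
  have hexp : ∀ t ∈ Icc (Real.log a) (Real.log b), Real.exp t ∈ Icc a b := fun t ht =>
    ⟨(Real.log_le_iff_le_exp ha).1 ht.1,
      (Real.le_log_iff_exp_le (ha.trans_le (hx.1.trans hx.2))).1 ht.2⟩
  have hlog : ∀ z ∈ Icc a b, Real.log z ∈ Icc (Real.log a) (Real.log b) := fun z hz =>
    ⟨Real.log_le_log ha hz.1, Real.log_le_log (hpos z hz) hz.2⟩
  have key := (convex_Icc (Real.log a) (Real.log b)).norm_image_sub_le_of_norm_hasDerivWithin_le
    (f := f ∘ Real.exp) (f' := fun t => deriv f (Real.exp t) * Real.exp t)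
    (fun t ht => ((hf _ (hexp t ht)).hasDerivAt.comp t (Real.hasDerivAt_exp t)).hasDerivWithinAt)
    (fun t ht => by simpa only [Real.norm_eq_abs, mul_comm] using hC _ (hexp t ht))
    (hlog y hy) (hlog x hx)
  simpa only [Function.comp_apply, Real.exp_log (hpos x hx), Real.exp_log (hpos y hy),
    Real.norm_eq_abs] using key

theorem abs_log_add_mul_log_sub_le {E : ℝ → ℝ} {a b p γ : ℝ} (ha : 0 < a)
    (hEpos : ∀ x ∈ Icc a b, 0 < E x) (hdiff : ∀ x ∈ Icc a b, DifferentiableAt ℝ E x)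
    (hbound : ∀ x ∈ Icc a b, |x * deriv (fun x => Real.log (E x)) x + p| ≤ γ)
    {x y : ℝ} (hx : x ∈ Icc a b) (hy : y ∈ Icc a b) :
    |Real.log (E x) + p * Real.log x - (Real.log (E y) + p * Real.log y)|
      ≤ γ * |Real.log x - Real.log y| := by
  have hpos : ∀ z ∈ Icc a b, 0 < z := fun z hz => ha.trans_le hz.1
  have hlogE : ∀ z ∈ Icc a b, DifferentiableAt ℝ (fun x => Real.log (E x)) z := fun z hz =>
    (hdiff z hz).log (hEpos z hz).ne'
  have hlog : ∀ z ∈ Icc a b, DifferentiableAt ℝ (fun x => p * Real.log x) z := fun z hz =>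
    (Real.differentiableAt_log (hpos z hz).ne').const_mul p
  refine abs_sub_le_mul_abs_log_sub_of_abs_mul_deriv_le ha
    (fun z hz => (hlogE z hz).add (hlog z hz)) (fun z hz => ?_) hx hy
  rw [deriv_add (hlogE z hz) (hlog z hz), deriv_const_mul _
    (Real.differentiableAt_log (hpos z hz).ne'), Real.deriv_log, mul_add,
    mul_left_comm, mul_inv_cancel₀ (hpos z hz).ne', mul_one]
  exact hbound z hz

theorem abs_log_sub_log_le_log_div {a b x y : ℝ} (ha : 0 < a) (hx : x ∈ Icc a b)
    (hy : y ∈ Icc a b) : |Real.log x - Real.log y| ≤ Real.log (b / a) := by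
  have hb : 0 < b := ha.trans_le (hx.1.trans hx.2)
  rw [Real.log_div hb.ne' ha.ne', abs_sub_le_iff]
  have := Real.log_le_log ha hx.1
  have := Real.log_le_log ha hy.1
  have := Real.log_le_log (ha.trans_le hx.1) hx.2
  have := Real.log_le_log (ha.trans_le hy.1) hy.2
  constructor <;> linarith

theorem rpow_neg_le_and_le_rpow_of_abs_log_le {r B c : ℝ} (hr : 0 < r) (hB : 0 < B)
    (h : |Real.log r| ≤ c * Real.log B) : B ^ (-c) ≤ r ∧ r ≤ B ^ c := by
  rw [Real.rpow_def_of_pos hB, Real.rpow_def_of_pos hB, ← Real.exp_log hr, Real.exp_le_exp,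
    Real.exp_le_exp]
  constructor <;> linarith [abs_le.1 h]

theorem kolmogorov_constant_oscillation_general (Kminus Kplus γ εbar : ℝ) (hK : 0 < Kminus)
    (hγ : 0 ≤ γ) (hε : 0 < εbar) (E : ℝ → ℝ)
    (hEpos : ∀ K ∈ Icc Kminus Kplus, 0 < E K)
    (hdiff : ∀ K ∈ Icc Kminus Kplus, DifferentiableAt ℝ E K)
    (hbound : ∀ K ∈ Icc Kminus Kplus, |K * deriv (fun x => Real.log (E x)) K + 5 / 3| ≤ γ) :
    let Re := (Kplus / Kminus) ^ ((4 : ℝ) / 3)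
    let α : ℝ → ℝ := fun K => E K / (εbar ^ ((2 : ℝ) / 3) * K ^ (-(5 : ℝ) / 3))
    ∀ K ∈ Icc Kminus Kplus, ∀ K' ∈ Icc Kminus Kplus,
      Re ^ (-(3 * γ) / 4) ≤ α K / α K' ∧ α K / α K' ≤ Re ^ (3 * γ / 4) := by
  intro Re α K hK₁ K' hK₂
  have hα : ∀ x ∈ Icc Kminus Kplus,
      0 < α x ∧ Real.log (α x) = Real.log (E x) + 5 / 3 * Real.log x - 2 / 3 * Real.log εbar := by
    intro x hx
    have hx₀ : 0 < x := hK.trans_le hx.1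
    refine ⟨div_pos (hEpos x hx) (by positivity), ?_⟩
    rw [Real.log_div (hEpos x hx).ne' (by positivity), Real.log_mul (by positivity) (by positivity),
      Real.log_rpow hε, Real.log_rpow hx₀]
    ring
  have hratio : 0 < Kplus / Kminus := div_pos (hK.trans_le (hK₁.1.trans hK₁.2)) hK
  have hlog : |Real.log (α K / α K')| ≤ 3 * γ / 4 * Real.log Re := by
    rw [Real.log_div (hα K hK₁).1.ne' (hα K' hK₂).1.ne', (hα K hK₁).2, (hα K' hK₂).2,
      Real.log_rpow hratio]
    calc _ = |Real.log (E K) + 5 / 3 * Real.log K - (Real.log (E K') + 5 / 3 * Real.log K')| := by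
          congr 1; ring
      _ ≤ γ * |Real.log K - Real.log K'| :=
          abs_log_add_mul_log_sub_le hK hEpos hdiff hbound hK₁ hK₂
      _ ≤ γ * Real.log (Kplus / Kminus) :=
          mul_le_mul_of_nonneg_left (abs_log_sub_log_le_log_div hK hK₁ hK₂) hγ
      _ = _ := by ring
  rw [neg_div]
  exact rpow_neg_le_and_le_rpow_of_abs_log_le (div_pos (hα K hK₁).1 (hα K' hK₂).1)
    (by positivity) hlog

/-- The `5/3` law: the spectral precision `γ` bounds the oscillation of the compensated
spectrum `α(K) = Ē*(K)/(ε̄^(2/3) K^(−5/3))` on the inertial range, in terms of the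
Reynolds number `Re = (K₊/K₋)^(4/3)`. -/
theorem kolmogorov_constant_oscillation (Kminus Kplus γ εbar : ℝ) (hK : 0 < Kminus)
    (hKK : Kminus < Kplus) (hγ : 0 ≤ γ) (hε : 0 < εbar) (E : ℝ → ℝ)
    (hEpos : ∀ K ∈ Icc Kminus Kplus, 0 < E K)
    (hdiff : ∀ K ∈ Icc Kminus Kplus, DifferentiableAt ℝ E K)
    (hbound : ∀ K ∈ Icc Kminus Kplus, |K * deriv (fun x => Real.log (E x)) K + 5 / 3| ≤ γ) :
    let Re := (Kplus / Kminus) ^ ((4 : ℝ) / 3)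
    let α : ℝ → ℝ := fun K => E K / (εbar ^ ((2 : ℝ) / 3) * K ^ (-(5 : ℝ) / 3))
    ∀ K ∈ Icc Kminus Kplus, ∀ K' ∈ Icc Kminus Kplus,
      Re ^ (-(3 * γ) / 4) ≤ α K / α K' ∧ α K / α K' ≤ Re ^ (3 * γ / 4) :=
  kolmogorov_constant_oscillation_general Kminus Kplus γ εbar hK hγ hε E hEpos hdiff hbound
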